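/- arXiv:2310.18697 — 5 statements merged into one kernel-verified Lean document; each statement's English description precedes it below -/
import Mathlib

section
/- If K is a symmetric positive definite m×m matrix, μ > 0, and P̃ ∈ ℝ^{(d+1)×m}, then the block matrix Δ = [[P̃·P̃ᵀ, P̃·K],[K·P̃ᵀ, K·K + μ·K]] is positive definite if and only if P̃·P̃ᵀ is positive definite. -/
/-!
Writing `M = [Pᴴ | K]`, the block matrix is `Mᴴ M + diag(0, μK)`. The top-left block of a positive
definite matrix is positive definite, which gives one direction. Conversely, on a vector `(x, y)`
the quadratic form is `|Pᴴx + Ky|² + μ yᴴKy`: the second term is positive when `y ≠ 0`, and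
when `y = 0` the form reduces to `xᴴ(PPᴴ)x`.
-/

open Matrix

namespace Matrix

variable {n p R : Type*}

theorem PosDef.toBlocks₁₁ [Ring R] [PartialOrder R] [StarRing R]
    {M : Matrix (n ⊕ p) (n ⊕ p) R} (hM : M.PosDef) : M.toBlocks₁₁.PosDef :=
  hM.submatrix Sum.inl_injective

theorem PosSemidef.fromBlocks_add_posDef [Fintype n] [Fintype p] [Ring R] [PartialOrder R]
    [StarRing R] [AddLeftStrictMono R] {A : Matrix n n R} {B : Matrix n p R} {D E : Matrix p p R}
    (hΔ : (fromBlocks A B Bᴴ D).PosSemidef) (hA : A.PosDef) (hE : E.PosDef) :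
    (fromBlocks A B Bᴴ (D + E)).PosDef := by
  have hsplit : fromBlocks A B Bᴴ (D + E) = fromBlocks A B Bᴴ D + fromBlocks 0 0 0 E := by
    simp [fromBlocks_add]
  refine .of_dotProduct_mulVec_pos ?_ fun z hz => ?_
  · rw [hsplit]
    exact hΔ.isHermitian.add (by simp [IsHermitian, fromBlocks_conjTranspose, hE.isHermitian.eq])
  obtain ⟨x, y, rfl⟩ : ∃ x y, z = Sum.elim x y :=
    ⟨z ∘ Sum.inl, z ∘ Sum.inr, by ext (i | i) <;> rfl⟩
  by_cases hy : y = 0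
  · subst hy
    have hx : x ≠ 0 := by rintro rfl; simp at hz
    simpa [fromBlocks_mulVec, Function.star_sumElim] using hA.dotProduct_mulVec_pos hx
  · rw [hsplit, add_mulVec, dotProduct_add]
    refine add_pos_of_nonneg_of_pos (hΔ.dotProduct_mulVec_nonneg _) ?_
    simpa [fromBlocks_mulVec, Function.star_sumElim] using hE.dotProduct_mulVec_pos hy

theorem fromBlocks_eq_conjTranspose_fromCols_mul_fromCols [Fintype p] [Ring R] [StarRing R]
    (P : Matrix n p R) {K : Matrix p p R} (hK : K.IsHermitian) :
    fromBlocks (P * Pᴴ) (P * K) (K * Pᴴ) (K * K) = (fromCols Pᴴ K)ᴴ * fromCols Pᴴ K := by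
  rw [conjTranspose_fromCols_eq_fromRows_conjTranspose, fromRows_mul_fromCols, hK.eq,
    conjTranspose_conjTranspose]

theorem posDef_fromBlocks_mul_conjTranspose_iff [Fintype n] [Fintype p] [CommRing R]
    [PartialOrder R] [StarRing R] [StarOrderedRing R] [PosSMulStrictMono R R]
    {K : Matrix p p R} (hK : K.PosDef) {μ : R} (hμ : 0 < μ) (P : Matrix n p R) :
    (fromBlocks (P * Pᴴ) (P * K) (K * Pᴴ) (K * K + μ • K)).PosDef ↔ (P * Pᴴ).PosDef := by
  refine ⟨fun h => by simpa using h.toBlocks₁₁, fun hP => ?_⟩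
  have hB : (P * K)ᴴ = K * Pᴴ := by rw [conjTranspose_mul, hK.isHermitian.eq]
  rw [← hB]
  refine PosSemidef.fromBlocks_add_posDef ?_ hP (hK.smul hμ)
  rw [hB, fromBlocks_eq_conjTranspose_fromCols_mul_fromCols P hK.isHermitian]
  exact posSemidef_conjTranspose_mul_self _

end Matrix

/-- For `K` symmetric positive definite and `μ > 0`, the block matrix
`Δ = [[P̃P̃ᵀ, P̃K],[KP̃ᵀ, KK + μK]]` is positive definite iff `P̃P̃ᵀ` is. -/
theorem stmt2 (d m : ℕ) (K : Matrix (Fin m) (Fin m) ℝ) (hK : K.PosDef)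
    (μ : ℝ) (hμ : 0 < μ) (P : Matrix (Fin (d + 1)) (Fin m) ℝ) :
    (Matrix.fromBlocks (P * Pᵀ) (P * K) (K * Pᵀ) (K * K + μ • K)).PosDef
      ↔ (P * Pᵀ).PosDef := by
  simpa only [conjTranspose_eq_transpose_of_trivial] using
    posDef_fromBlocks_mul_conjTranspose_iff hK hμ P
end

section
/- With 𝒫 = P̃ᵀ·(P̃·P̃ᵀ)†·P̃, K symmetric positive definite, μ > 0, S = K·(I−𝒫)·K + μ·K, and Q = (I−𝒫) − (I−𝒫)·K·S⁻¹·K·(I−𝒫), the matrix Q is symmetric positive semidefinite and satisfies I ⪰ I−𝒫 ⪰ Q ⪰ 0 in the Loewner order. -/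
open Matrix

/-- `B` is the Moore–Penrose pseudoinverse of `A` (the four Penrose conditions). -/
def IsMoorePenrose {n p : Type*} [Fintype n] [Fintype p]
    (A : Matrix n p ℝ) (B : Matrix p n ℝ) : Prop :=
  A * B * A = A ∧ B * A * B = B ∧ (A * B)ᵀ = A * B ∧ (B * A)ᵀ = B * A

/-!
`𝒫` is the orthogonal projection onto the row space of `P̃`: it is idempotent by the Penrose
identity `G (P̃P̃ᵀ) G = G`, and symmetric because the pseudoinverse of the symmetric matrix `P̃P̃ᵀ`
is symmetric by uniqueness. So `E = I − 𝒫` and `I − E = 𝒫` are symmetric idempotents, hence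
positive semidefinite. Since `S = KEK + μK ≻ 0`, the matrix `E − Q = EKS⁻¹KE` is positive
semidefinite, and with `Y = S⁻¹KE` and `S⁻¹S = I` one checks
`Q = (E − KY)ᵀ E (E − KY) + Yᵀ (μK) Y ⪰ 0`.
-/

open scoped MatrixOrder ComplexOrder

namespace IsMoorePenrose

variable {n p : Type*} [Fintype n] [Fintype p]

theorem transpose {A : Matrix n p ℝ} {B : Matrix p n ℝ} (h : IsMoorePenrose A B) :
    IsMoorePenrose Aᵀ Bᵀ := by
  obtain ⟨h₁, h₂, h₃, h₄⟩ := h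
  refine ⟨?_, ?_, ?_, ?_⟩
  · simpa only [transpose_mul, Matrix.mul_assoc] using congrArg Matrix.transpose h₁
  · simpa only [transpose_mul, Matrix.mul_assoc] using congrArg Matrix.transpose h₂
  · rw [← transpose_mul, transpose_transpose, h₄]
  · rw [← transpose_mul, transpose_transpose, h₃]

theorem unique {A : Matrix n p ℝ} {B C : Matrix p n ℝ} (hB : IsMoorePenrose A B)
    (hC : IsMoorePenrose A C) : B = C := by
  obtain ⟨hB₁, hB₂, hB₃, hB₄⟩ := hB
  obtain ⟨hC₁, hC₂, hC₃, hC₄⟩ := hC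
  have hB_eq : B = B * A * C :=
    calc B = B * (A * C * A * B)ᵀ := by rw [hC₁, hB₃, ← Matrix.mul_assoc, hB₂]
      _ = B * ((A * B)ᵀ * (A * C)ᵀ) := by rw [← transpose_mul]; simp only [Matrix.mul_assoc]
      _ = B * A * B * A * C := by rw [hB₃, hC₃]; simp only [Matrix.mul_assoc]
      _ = B * A * C := by rw [hB₂]
  have hC_eq : C = B * A * C :=
    calc C = (C * (A * B * A))ᵀ * C := by rw [hB₁, hC₄, hC₂]
      _ = ((B * A)ᵀ * (C * A)ᵀ) * C := by rw [← transpose_mul]; simp only [Matrix.mul_assoc]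
      _ = B * A * (C * A * C) := by rw [hB₄, hC₄]; simp only [Matrix.mul_assoc]
      _ = B * A * C := by rw [hC₂]
  exact hB_eq.trans hC_eq.symm

theorem transpose_eq_self {A B : Matrix n n ℝ} (hA : Aᵀ = A) (h : IsMoorePenrose A B) :
    Bᵀ = B :=
  (hA ▸ h.transpose).unique h

theorem isStarProjection_transpose_mul_mul {P : Matrix p n ℝ} {G : Matrix p p ℝ}
    (h : IsMoorePenrose (P * Pᵀ) G) : IsStarProjection (Pᵀ * G * P) where
  isIdempotentElem :=
    calc Pᵀ * G * P * (Pᵀ * G * P) = Pᵀ * (G * (P * Pᵀ) * G) * P := by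
          simp only [Matrix.mul_assoc]
      _ = Pᵀ * G * P := by rw [h.2.1]
  isSelfAdjoint := by
    have hG : Gᵀ = G := h.transpose_eq_self (by rw [transpose_mul, transpose_transpose])
    change (Pᵀ * G * P)ᴴ = _
    rw [conjTranspose_eq_transpose_of_trivial, transpose_mul, transpose_mul, transpose_transpose,
      hG, Matrix.mul_assoc]

end IsMoorePenrose

namespace Matrix

variable {n 𝕜 : Type*} [Fintype n] [RCLike 𝕜]

theorem PosSemidef.posDef_mul_mul_add {E K C : Matrix n n 𝕜} (hE : E.PosSemidef)
    (hK : K.IsHermitian) (hC : C.PosDef) : (K * E * K + C).PosDef := by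
  have hKEK : (K * E * K).PosSemidef := by
    simpa only [hK.eq] using hE.mul_mul_conjTranspose_same K
  exact PosDef.posSemidef_add hKEK hC

variable [DecidableEq n]

theorem PosSemidef.mul_mul_inv_mul_mul {E K S : Matrix n n 𝕜} (hE : E.IsHermitian)
    (hK : K.IsHermitian) (hS : S.PosSemidef) : (E * K * S⁻¹ * K * E).PosSemidef := by
  simpa only [conjTranspose_mul, hE.eq, hK.eq, Matrix.mul_assoc] using
    hS.inv.conjTranspose_mul_mul_same (K * E)

theorem posSemidef_sub_mul_inv_mul_of_isStarProjection {E K C : Matrix n n 𝕜}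
    (hE : IsStarProjection E) (hK : K.IsHermitian) (hC : C.PosDef) :
    (E - E * K * (K * E * K + C)⁻¹ * K * E).PosSemidef := by
  set S := K * E * K + C
  have hEH : Eᴴ = E := hE.isSelfAdjoint
  have hE_psd : E.PosSemidef := hE.nonneg.posSemidef
  have hS : S.PosDef := hE_psd.posDef_mul_mul_add hK hC
  have hXH : (S⁻¹)ᴴ = S⁻¹ := hS.inv.isHermitian
  have hXS : S⁻¹ * S = 1 := nonsing_inv_mul S ((isUnit_iff_isUnit_det S).mp hS.isUnit)
  set Y := S⁻¹ * K * E
  have hYH : Yᴴ = E * K * S⁻¹ := by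
    simp only [Y, conjTranspose_mul, hEH, hK.eq, hXH, Matrix.mul_assoc]
  have key : E - E * K * S⁻¹ * K * E = (E - K * Y)ᴴ * E * (E - K * Y) + Yᴴ * C * Y := by
    have hEE : E * E = E := hE.isIdempotentElem
    rw [conjTranspose_sub, hEH, conjTranspose_mul, hK.eq, hYH]
    calc E - E * K * S⁻¹ * K * E
        = E * E * E - E * E * K * S⁻¹ * K * E - E * K * S⁻¹ * K * (E * E)
          + E * K * (S⁻¹ * S) * S⁻¹ * K * E := by
          rw [hEE, hEE, hXS]; noncomm_ring
      _ = (E - E * K * S⁻¹ * K) * E * (E - K * Y) + E * K * S⁻¹ * C * Y := by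
          simp only [S, Y]; noncomm_ring
  rw [key]
  exact (hE_psd.conjTranspose_mul_mul_same _).add (hC.posSemidef.conjTranspose_mul_mul_same Y)

end Matrix

/-- With `𝒫 = P̃ᵀ(P̃P̃ᵀ)†P̃`, `S = K(I−𝒫)K + μK` and
`Q = (I−𝒫) − (I−𝒫)·K·S⁻¹·K·(I−𝒫)`, the matrix `Q` is symmetric positive
semidefinite and `I ⪰ I−𝒫 ⪰ Q ⪰ 0` in the Loewner order. -/
theorem stmt4 (d m : ℕ) (P : Matrix (Fin (d + 1)) (Fin m) ℝ)
    (G : Matrix (Fin (d + 1)) (Fin (d + 1)) ℝ) (hG : IsMoorePenrose (P * Pᵀ) G)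
    (K : Matrix (Fin m) (Fin m) ℝ) (hK : K.PosDef) (μ : ℝ) (hμ : 0 < μ)
    (Proj : Matrix (Fin m) (Fin m) ℝ) (hProj : Proj = Pᵀ * G * P)
    (S : Matrix (Fin m) (Fin m) ℝ) (hS : S = K * (1 - Proj) * K + μ • K)
    (Q : Matrix (Fin m) (Fin m) ℝ)
    (hQ : Q = (1 - Proj) - (1 - Proj) * K * S⁻¹ * K * (1 - Proj)) :
    Qᵀ = Q ∧ Q.PosSemidef ∧ ((1 - Proj) - Q).PosSemidef ∧
      ((1 : Matrix (Fin m) (Fin m) ℝ) - (1 - Proj)).PosSemidef := by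
  have hE : IsStarProjection (1 - Proj) :=
    (hProj ▸ hG.isStarProjection_transpose_mul_mul).one_sub
  have hQ_psd : Q.PosSemidef := hQ ▸ hS ▸
    posSemidef_sub_mul_inv_mul_of_isStarProjection hE hK.isHermitian (hK.smul hμ)
  have hS_pd : S.PosDef :=
    hS ▸ hE.nonneg.posSemidef.posDef_mul_mul_add hK.isHermitian (hK.smul hμ)
  refine ⟨?_, hQ_psd, ?_, hE.one_sub_nonneg.posSemidef⟩
  · rw [← conjTranspose_eq_transpose_of_trivial, hQ_psd.isHermitian.eq]
  · rw [hQ, sub_sub_cancel]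
    exact hS_pd.posSemidef.mul_mul_inv_mul_mul hE.isSelfAdjoint hK.isHermitian
end

section
/- Let 𝒫 be a symmetric idempotent m×m matrix, K symmetric positive definite, μ > 0, S = K·(I−𝒫)·K + μ·K, H = (I−𝒫)·K·S⁻¹, and Q = (I−𝒫) − (I−𝒫)·K·S⁻¹·K·(I−𝒫). Then H is symmetric (H = Hᵀ = S⁻¹·K·(I−𝒫)) and Q = μ·H. -/
/-!
Write `E = 1 - 𝒫` and `S = KEK + μK`. Both `S · EK` and `KE · S` expand to `KEKEK + μKEK`, so
`S` intertwines `EK` with `KE`; once `S` is invertible this gives `EKS⁻¹ = S⁻¹KE`, which is the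
transpose of `EKS⁻¹`. Substituting `KEKE = (S - μK)E` then turns `EKS⁻¹KE = S⁻¹KEKE` into
`E - μS⁻¹KE`. Invertibility holds because `KEK = (EK)ᴴ(EK)` is positive semidefinite and `μK` is
positive definite.
-/

open Matrix

theorem semiconjBy_mul_mul_add_smul {R A : Type*} [CommSemiring R] [Semiring A] [Algebra R A]
    (E K : A) (μ : R) : SemiconjBy (K * E * K + μ • K) (E * K) (K * E) := by
  simp only [SemiconjBy, add_mul, mul_add, smul_mul_assoc, mul_smul_comm, mul_assoc]

namespace Matrix

theorem PosDef.mul_mul_add_smul {n 𝕜 : Type*} [Fintype n] [Field 𝕜] [PartialOrder 𝕜]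
    [StarRing 𝕜] [StarOrderedRing 𝕜] {E K : Matrix n n 𝕜} (hE : IsStarProjection E)
    (hK : K.PosDef) {μ : 𝕜} (hμ : 0 < μ) : (K * E * K + μ • K).PosDef := by
  have hE' : E = Eᴴ * E := by
    rw [← star_eq_conjTranspose, hE.isSelfAdjoint.star_eq, hE.isIdempotentElem.eq]
  refine PosDef.posSemidef_add ?_ (hK.smul hμ)
  have := (posSemidef_conjTranspose_mul_self E).mul_mul_conjTranspose_same K
  rwa [← hE', hK.isHermitian.eq] at this

variable {n α : Type*} [Fintype n] [DecidableEq n] [CommRing α]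

theorem mul_nonsing_inv_eq_of_semiconjBy {S X Y : Matrix n n α} (hS : IsUnit S)
    (h : SemiconjBy S X Y) : X * S⁻¹ = S⁻¹ * Y := by
  obtain ⟨u, rfl⟩ := hS
  rw [← coe_units_inv]
  exact h.units_inv_symm_left.eq.symm

section

variable (E K : Matrix n n α) (μ : α)

theorem mul_mul_nonsing_inv_eq_nonsing_inv_mul_mul (hS : IsUnit (K * E * K + μ • K)) :
    E * K * (K * E * K + μ • K)⁻¹ = (K * E * K + μ • K)⁻¹ * K * E :=
  (mul_nonsing_inv_eq_of_semiconjBy hS (semiconjBy_mul_mul_add_smul E K μ)).trans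
    (Matrix.mul_assoc _ _ _).symm

theorem sub_mul_mul_nonsing_inv_mul_mul_eq_smul (hS : IsUnit (K * E * K + μ • K)) :
    E - E * K * (K * E * K + μ • K)⁻¹ * K * E = μ • (E * K * (K * E * K + μ • K)⁻¹) := by
  have hswap := mul_mul_nonsing_inv_eq_nonsing_inv_mul_mul E K μ hS
  set S := K * E * K + μ • K
  have hKEKE : K * E * K * E = S * E - μ • (K * E) := by
    simp only [S, add_mul, smul_mul_assoc]
    abel
  calc E - E * K * S⁻¹ * K * E = E - S⁻¹ * (K * E * K * E) := by
        rw [hswap]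
        simp only [Matrix.mul_assoc]
    _ = E - (E - μ • (S⁻¹ * (K * E))) := by
        rw [hKEKE, Matrix.mul_sub, nonsing_inv_mul_cancel_left (A := S) _
          ((isUnit_iff_isUnit_det S).mp hS), mul_smul_comm]
    _ = μ • (E * K * S⁻¹) := by
        rw [hswap, Matrix.mul_assoc]
        abel

end

theorem transpose_mul_mul_nonsing_inv {E K S : Matrix n n α} (hE : Eᵀ = E) (hK : Kᵀ = K)
    (hS : Sᵀ = S) : (E * K * S⁻¹)ᵀ = S⁻¹ * K * E := by
  rw [transpose_mul, transpose_mul, transpose_nonsing_inv, hE, hK, hS, Matrix.mul_assoc]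

end Matrix

/-- For `𝒫` symmetric idempotent, `K` symmetric positive definite, `μ > 0`,
`S = K(I−𝒫)K + μK`, `H = (I−𝒫)·K·S⁻¹` and `Q = (I−𝒫) − (I−𝒫)·K·S⁻¹·K·(I−𝒫)`:
`H` is symmetric (`H = Hᵀ = S⁻¹·K·(I−𝒫)`) and `Q = μ·H`. -/
theorem stmt6 (m : ℕ) (Proj : Matrix (Fin m) (Fin m) ℝ)
    (hProjSymm : Projᵀ = Proj) (hProjIdem : Proj * Proj = Proj)
    (K : Matrix (Fin m) (Fin m) ℝ) (hK : K.PosDef) (μ : ℝ) (hμ : 0 < μ)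
    (S : Matrix (Fin m) (Fin m) ℝ) (hS : S = K * (1 - Proj) * K + μ • K)
    (H : Matrix (Fin m) (Fin m) ℝ) (hH : H = (1 - Proj) * K * S⁻¹)
    (Q : Matrix (Fin m) (Fin m) ℝ)
    (hQ : Q = (1 - Proj) - (1 - Proj) * K * S⁻¹ * K * (1 - Proj)) :
    Hᵀ = H ∧ H = S⁻¹ * K * (1 - Proj) ∧ Q = μ • H := by
  subst hS hH hQ
  have hE : IsStarProjection (1 - Proj) :=
    IsStarProjection.one_sub ⟨hProjIdem, isHermitian_iff_isSymm.mpr hProjSymm⟩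
  have hS := hK.mul_mul_add_smul hE hμ
  have hswap := mul_mul_nonsing_inv_eq_nonsing_inv_mul_mul _ K μ hS.isUnit
  refine ⟨?_, hswap, sub_mul_mul_nonsing_inv_mul_mul_eq_smul _ _ _ hS.isUnit⟩
  rw [transpose_mul_mul_nonsing_inv (isHermitian_iff_isSymm.mp hE.isSelfAdjoint).eq
    (isHermitian_iff_isSymm.mp hK.isHermitian).eq (isHermitian_iff_isSymm.mp hS.isHermitian).eq,
    hswap]
end

section
/- Let Π ∈ ℝ^{m×m} be symmetric with eigenvalues σ₁ ≥ … ≥ σ_m and orthonormal eigenvectors u₁, …, u_m, and let Λ = diag(λ₁,…,λ_d) with λ₁ ≥ … ≥ λ_d ≥ 0 and d ≤ m. Then the minimum of tr(Xᵀ·Π·X·Λ) over X ∈ ℝ^{m×d} with Xᵀ·X = I is λ₁σ_m + λ₂σ_{m−1} + … + λ_dσ_{m−d+1}, attained at X = [u_m, u_{m−1}, …, u_{m−d+1}]. -/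
open Matrix

private lemma abel_aux (d : ℕ) (a f : ℕ → ℝ) (ha : ∀ k, a (k + 1) ≤ a k)
    (ha0 : ∀ k, 0 ≤ a k)
    (hF : ∀ t, t ≤ d → 0 ≤ ∑ k ∈ Finset.range t, f k) (had : a d = 0) :
    0 ≤ ∑ k ∈ Finset.range d, a k * f k := by
  have key : ∀ n, n ≤ d →
      a n * (∑ k ∈ Finset.range n, f k) ≤ ∑ k ∈ Finset.range n, a k * f k := by
    intro n
    induction n with
    | zero => simp
    | succ n ih =>
      intro hn
      have h1 := ih (Nat.le_of_succ_le hn)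
      have h2 := hF (n + 1) hn
      have h3 := ha n
      have h4 := ha0 (n + 1)
      rw [Finset.sum_range_succ, Finset.sum_range_succ]
      rw [Finset.sum_range_succ] at h2
      nlinarith
  have h := key d le_rfl
  rw [had, zero_mul] at h
  exact h

/-- Brockett minimization on the Stiefel manifold: for symmetric `Π = U·diag(σ)·Uᵀ`
with `σ` non-ascending and `Λ = diag(λ)` with `λ` non-negative non-increasing,
the minimum of `tr(XᵀΠXΛ)` over `XᵀX = I` is `λ₁σ_m + … + λ_dσ_{m−d+1}`,
attained at the `d` bottom eigenvectors `X = [u_m,…,u_{m−d+1}]`. -/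
theorem stmt10 (m d : ℕ) (hd : d ≤ m) (Pm U : Matrix (Fin m) (Fin m) ℝ)
    (σ : Fin m → ℝ) (hσ : Antitone σ) (hU : Uᵀ * U = 1)
    (hPm : Pm = U * Matrix.diagonal σ * Uᵀ)
    (lam : Fin d → ℝ) (hlam : Antitone lam) (hlam0 : ∀ k, 0 ≤ lam k) :
    IsLeast {v : ℝ | ∃ X : Matrix (Fin m) (Fin d) ℝ, Xᵀ * X = 1 ∧
        v = (Xᵀ * Pm * X * Matrix.diagonal lam).trace}
      (∑ k : Fin d, lam k * σ (Fin.rev (Fin.castLE hd k))) ∧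
    ((U.submatrix id fun k => Fin.rev (Fin.castLE hd k))ᵀ *
        (U.submatrix id fun k => Fin.rev (Fin.castLE hd k)) = 1 ∧
      ((U.submatrix id fun k => Fin.rev (Fin.castLE hd k))ᵀ * Pm *
          (U.submatrix id fun k => Fin.rev (Fin.castLE hd k)) *
          Matrix.diagonal lam).trace
        = ∑ k : Fin d, lam k * σ (Fin.rev (Fin.castLE hd k))) := by
  have hUU : U * Uᵀ = 1 := mul_eq_one_comm.mp hU
  set g : Fin d → Fin m := fun k => Fin.rev (Fin.castLE hd k) with hg
  have hginj : Function.Injective g := fun a b hab =>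
    Fin.castLE_injective hd (Fin.rev_injective hab)
  -- general trace formula
  have trace_eq : ∀ X : Matrix (Fin m) (Fin d) ℝ,
      (Xᵀ * Pm * X * Matrix.diagonal lam).trace
        = ∑ k : Fin d, lam k * ∑ i : Fin m, σ i * ((Uᵀ * X) i k) ^ 2 := by
    intro X
    have h1 : Xᵀ * Pm * X = (Uᵀ * X)ᵀ * Matrix.diagonal σ * (Uᵀ * X) := by
      subst hPm
      simp only [Matrix.transpose_mul, Matrix.transpose_transpose]
      rw [Matrix.mul_assoc, Matrix.mul_assoc, Matrix.mul_assoc, Matrix.mul_assoc,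
        Matrix.mul_assoc]
    rw [h1]
    rw [Matrix.trace]
    refine Finset.sum_congr rfl fun k _ => ?_
    rw [Matrix.diag_apply, Matrix.mul_diagonal, Matrix.mul_assoc, Matrix.mul_apply,
      Finset.sum_mul, Finset.mul_sum]
    refine Finset.sum_congr rfl fun i _ => ?_
    rw [Matrix.transpose_apply, Matrix.diagonal_mul]
    ring
  -- the candidate matrix
  set V : Matrix (Fin m) (Fin d) ℝ := U.submatrix id g with hV
  have hVtV : Vᵀ * V = 1 := by
    ext k l
    rw [Matrix.mul_apply]
    have h1 : ∑ i : Fin m, Vᵀ k i * V i l = (Uᵀ * U) (g k) (g l) := by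
      rw [Matrix.mul_apply]
      refine Finset.sum_congr rfl fun i _ => ?_
      simp [hV, Matrix.submatrix_apply]
    rw [h1, hU, Matrix.one_apply, Matrix.one_apply]
    by_cases h : k = l
    · simp [h]
    · rw [if_neg h, if_neg (fun hc => h (hginj hc))]
  have hUV : ∀ i k, (Uᵀ * V) i k = if i = g k then 1 else 0 := by
    intro i k
    have h1 : (Uᵀ * V) i k = (Uᵀ * U) i (g k) := by
      rw [Matrix.mul_apply, Matrix.mul_apply]
      refine Finset.sum_congr rfl fun j _ => ?_
      simp [hV, Matrix.submatrix_apply]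
    rw [h1, hU, Matrix.one_apply]
  have hVsum : ∀ k : Fin d, ∑ i : Fin m, σ i * ((Uᵀ * V) i k) ^ 2 = σ (g k) := by
    intro k
    rw [Finset.sum_eq_single (g k)]
    · rw [hUV]; simp
    · intro b _ hb; rw [hUV, if_neg hb]; ring
    · intro h; exact absurd (Finset.mem_univ _) h
  have hVtrace : (Vᵀ * Pm * V * Matrix.diagonal lam).trace
      = ∑ k : Fin d, lam k * σ (g k) := by
    rw [trace_eq V]
    exact Finset.sum_congr rfl fun k _ => by rw [hVsum k]
  -- lower bound
  have lower : ∀ X : Matrix (Fin m) (Fin d) ℝ, Xᵀ * X = 1 →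
      (∑ k : Fin d, lam k * σ (g k)) ≤ (Xᵀ * Pm * X * Matrix.diagonal lam).trace := by
    intro X hX
    rw [trace_eq X]
    set Y : Matrix (Fin m) (Fin d) ℝ := Uᵀ * X with hY
    have hYtY : Yᵀ * Y = 1 := by
      have : Yᵀ * Y = Xᵀ * (U * Uᵀ) * X := by
        rw [hY, Matrix.transpose_mul, Matrix.transpose_transpose, Matrix.mul_assoc,
          Matrix.mul_assoc, Matrix.mul_assoc]
      rw [this, hUU, Matrix.mul_one, hX]
    have hcol : ∀ k : Fin d, ∑ i : Fin m, (Y i k) ^ 2 = 1 := by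
      intro k
      have h1 : (Yᵀ * Y) k k = (1 : Matrix (Fin d) (Fin d) ℝ) k k := by rw [hYtY]
      rw [Matrix.mul_apply, Matrix.one_apply_eq] at h1
      rw [← h1]
      exact Finset.sum_congr rfl fun i _ => by rw [Matrix.transpose_apply, sq]
    have hrow : ∀ i : Fin m, ∑ k : Fin d, (Y i k) ^ 2 ≤ 1 := by
      intro i
      have hidem : (Y * Yᵀ) * (Y * Yᵀ) = Y * Yᵀ := by
        rw [Matrix.mul_assoc, ← Matrix.mul_assoc Yᵀ, hYtY, Matrix.one_mul]
      have hsymm : ∀ j, (Y * Yᵀ) j i = (Y * Yᵀ) i j := by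
        intro j
        rw [Matrix.mul_apply, Matrix.mul_apply]
        exact Finset.sum_congr rfl fun k _ => by
          rw [Matrix.transpose_apply, Matrix.transpose_apply, mul_comm]
      have hdiag : ∑ k : Fin d, (Y i k) ^ 2 = (Y * Yᵀ) i i := by
        rw [Matrix.mul_apply]
        exact Finset.sum_congr rfl fun k _ => by rw [Matrix.transpose_apply, sq]
      set r : ℝ := (Y * Yᵀ) i i with hr
      have h1 : r = ∑ j : Fin m, ((Y * Yᵀ) i j) ^ 2 := by
        have h2 : ((Y * Yᵀ) * (Y * Yᵀ)) i i = r := by rw [hidem]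
        rw [Matrix.mul_apply] at h2
        rw [← h2]
        exact (Finset.sum_congr rfl fun j _ => by rw [hsymm j, sq]).symm
      have h2 : r ^ 2 ≤ r := by
        nth_rewrite 2 [h1]
        rw [hr]
        exact Finset.single_le_sum (fun j (_ : j ∈ Finset.univ) =>
          sq_nonneg ((Y * Yᵀ) i j)) (Finset.mem_univ i)
      have h0 : 0 ≤ r := by
        rw [← hdiag]
        exact Finset.sum_nonneg fun k _ => sq_nonneg _
      rw [hdiag]
      nlinarith
    -- ℕ-indexed auxiliaries
    set Y' : Fin m → ℕ → ℝ := fun i k => if h : k < d then Y i ⟨k, h⟩ else 0 with hY'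
    set σ' : ℕ → ℝ := fun i => if h : i < m then σ ⟨i, h⟩ else 0 with hσ'
    set a : ℕ → ℝ := fun k => if h : k < d then lam ⟨k, h⟩ else 0 with ha
    set cc : ℕ → ℝ := fun k => ∑ i : Fin m, σ i * (Y' i k) ^ 2 with hcc
    set ee : ℕ → ℝ := fun k => σ' (m - 1 - k) with hee
    have ha0 : ∀ k, 0 ≤ a k := by
      intro k
      simp only [ha]
      by_cases h : k < d
      · rw [dif_pos h]; exact hlam0 _
      · rw [dif_neg h]
    have hamono : ∀ k, a (k + 1) ≤ a k := by
      intro k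
      simp only [ha]
      by_cases h1 : k + 1 < d
      · rw [dif_pos h1, dif_pos (Nat.lt_of_succ_lt h1)]
        exact hlam (by simp [Fin.le_def])
      · rw [dif_neg h1]
        by_cases h2 : k < d
        · rw [dif_pos h2]; exact hlam0 _
        · rw [dif_neg h2]
    have had : a d = 0 := by simp only [ha]; rw [dif_neg (lt_irrefl d)]
    have hcol' : ∀ k (h : k < d), ∑ i : Fin m, (Y' i k) ^ 2 = 1 := by
      intro k h
      rw [← hcol ⟨k, h⟩]
      exact Finset.sum_congr rfl fun i _ => by simp only [hY']; rw [dif_pos h]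
    have hrow' : ∀ i : Fin m, ∑ k ∈ Finset.range d, (Y' i k) ^ 2 ≤ 1 := by
      intro i
      rw [← Fin.sum_univ_eq_sum_range (fun k => (Y' i k) ^ 2) d]
      calc ∑ k : Fin d, (Y' i (k : ℕ)) ^ 2 = ∑ k : Fin d, (Y i k) ^ 2 :=
            Finset.sum_congr rfl fun k _ => by simp only [hY']; rw [dif_pos k.isLt]
        _ ≤ 1 := hrow i
    -- prefix sums inequality
    have hprefix : ∀ t, t ≤ d →
        ∑ k ∈ Finset.range t, ee k ≤ ∑ k ∈ Finset.range t, cc k := by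
      intro t ht
      rcases Nat.eq_zero_or_pos t with rfl | htpos
      · simp
      have htm : t ≤ m := ht.trans hd
      have hmt : m - t < m := by omega
      set θ : ℝ := σ ⟨m - t, hmt⟩ with hθ
      set q : Fin m → ℝ := fun i => ∑ k ∈ Finset.range t, (Y' i k) ^ 2 with hq
      have hq0 : ∀ i, 0 ≤ q i := fun i => Finset.sum_nonneg fun _ _ => sq_nonneg _
      have hq1 : ∀ i, q i ≤ 1 := fun i =>
        le_trans (Finset.sum_le_sum_of_subset_of_nonneg (Finset.range_subset_range.2 ht)
          fun _ _ _ => sq_nonneg _) (hrow' i)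
      have hqsum : ∑ i : Fin m, q i = (t : ℝ) := by
        simp only [hq]
        rw [Finset.sum_comm]
        rw [Finset.sum_congr rfl fun k hk =>
          hcol' k (lt_of_lt_of_le (Finset.mem_range.1 hk) ht)]
        simp
      have hccsum : ∑ k ∈ Finset.range t, cc k = ∑ i : Fin m, σ i * q i := by
        simp only [hcc, hq]
        rw [Finset.sum_comm]
        exact Finset.sum_congr rfl fun i _ => (Finset.mul_sum _ _ _).symm
      have hpoint : ∀ i : Fin m,
          (if m - t ≤ (i : ℕ) then σ i - θ else 0) ≤ (σ i - θ) * q i := by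
        intro i
        by_cases hi : m - t ≤ (i : ℕ)
        · rw [if_pos hi]
          have hσi : σ i ≤ θ := hσ (show (⟨m - t, hmt⟩ : Fin m) ≤ i from hi)
          nlinarith [hq1 i, hq0 i]
        · rw [if_neg hi]
          have hσi : θ ≤ σ i := hσ (show i ≤ (⟨m - t, hmt⟩ : Fin m) from show (i : ℕ) ≤ m - t by omega)
          nlinarith [hq0 i]
      have hsum1 : ∑ i : Fin m, (if m - t ≤ (i : ℕ) then σ i - θ else 0)
          ≤ ∑ i : Fin m, (σ i - θ) * q i :=
        Finset.sum_le_sum fun i _ => hpoint i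
      have e1 : ∑ i : Fin m, (if m - t ≤ (i : ℕ) then σ i - θ else 0)
          = ∑ i ∈ Finset.range m, (if m - t ≤ i then σ' i - θ else 0) := by
        rw [← Fin.sum_univ_eq_sum_range (fun i => if m - t ≤ i then σ' i - θ else 0) m]
        refine Finset.sum_congr rfl fun i _ => ?_
        by_cases hi : m - t ≤ (i : ℕ)
        · rw [if_pos hi, if_pos hi]
          simp only [hσ']
          rw [dif_pos i.isLt]
        · rw [if_neg hi, if_neg hi]
      have e2 : ∑ i ∈ Finset.range m, (if m - t ≤ i then σ' i - θ else 0)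
          = ∑ i ∈ Finset.Ico (m - t) m, (σ' i - θ) := by
        rw [← Finset.sum_filter]
        congr 1
        ext x
        simp only [Finset.mem_filter, Finset.mem_range, Finset.mem_Ico]
        omega
      have e3 : ∑ i ∈ Finset.Ico (m - t) m, (σ' i - θ)
          = ∑ k ∈ Finset.range t, (σ' (m - t + k) - θ) := by
        rw [Finset.sum_Ico_eq_sum_range]
        rw [Nat.sub_sub_self htm]
      have e4 : ∑ i : Fin m, (σ i - θ) * q i = (∑ i : Fin m, σ i * q i) - θ * t := by
        rw [Finset.sum_congr rfl fun i (_ : i ∈ Finset.univ) =>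
          (show (σ i - θ) * q i = σ i * q i - θ * q i by ring)]
        rw [Finset.sum_sub_distrib, ← Finset.mul_sum, hqsum]
      have e5 : ∑ k ∈ Finset.range t, (σ' (m - t + k) - θ)
          = (∑ k ∈ Finset.range t, σ' (m - t + k)) - θ * t := by
        rw [Finset.sum_sub_distrib, Finset.sum_const, Finset.card_range]
        ring
      have e6 : ∑ k ∈ Finset.range t, ee k = ∑ k ∈ Finset.range t, σ' (m - t + k) := by
        rw [← Finset.sum_range_reflect (fun k => σ' (m - t + k)) t]
        refine Finset.sum_congr rfl fun k hk => ?_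
        have hk' := Finset.mem_range.1 hk
        simp only [hee]
        congr 1
        omega
      rw [hccsum, e6]
      have := hsum1
      rw [e1, e2, e3, e5, e4] at this
      linarith
    -- combine via Abel summation
    have h0 : 0 ≤ ∑ k ∈ Finset.range d, a k * (cc k - ee k) :=
      abel_aux d a (fun k => cc k - ee k) hamono ha0
        (fun t ht => by
          rw [Finset.sum_sub_distrib]
          linarith [hprefix t ht]) had
    rw [Finset.sum_congr rfl fun k (_ : k ∈ Finset.range d) =>
      (show a k * (cc k - ee k) = a k * cc k - a k * ee k by ring),
      Finset.sum_sub_distrib] at h0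
    have hc : ∑ k ∈ Finset.range d, a k * cc k
        = ∑ k : Fin d, lam k * ∑ i : Fin m, σ i * ((Uᵀ * X) i k) ^ 2 := by
      rw [← Fin.sum_univ_eq_sum_range (fun k => a k * cc k) d]
      refine Finset.sum_congr rfl fun k _ => ?_
      simp only [ha, hcc, hY']
      rw [dif_pos k.isLt]
      congr 1
      refine Finset.sum_congr rfl fun i _ => ?_
      rw [dif_pos k.isLt]
    have he : ∑ k ∈ Finset.range d, a k * ee k = ∑ k : Fin d, lam k * σ (g k) := by
      rw [← Fin.sum_univ_eq_sum_range (fun k => a k * ee k) d]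
      refine Finset.sum_congr rfl fun k _ => ?_
      simp only [ha, hee, hσ']
      have hlt : m - 1 - (k : ℕ) < m := by
        have := k.isLt
        omega
      rw [dif_pos k.isLt, dif_pos hlt]
      have hgk : g k = ⟨m - 1 - (k : ℕ), hlt⟩ := by
        apply Fin.ext
        simp only [hg, Fin.val_rev, Fin.coe_castLE]
        omega
      rw [Fin.eta, hgk]
    rw [hc, he] at h0
    linarith
  refine ⟨⟨⟨V, hVtV, hVtrace.symm⟩, ?_⟩, hVtV, hVtrace⟩
  rintro v ⟨X, hX, rfl⟩
  exact lower X hX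
end

section
/- Constrained Brockett minimization: let Q ∈ ℝ^{m×m} be symmetric with Q·1 = 0, and Λ = diag(λ₁,…,λ_d) with λ₁ ≥ … ≥ λ_d ≥ 0, d < m. Then the minimum of tr(Xᵀ·Q·X·Λ) subject to Xᵀ·X = I and Xᵀ·1 = 0 equals the minimum of tr(Xᵀ·(Q + n·1·1ᵀ)·X·Λ) subject only to Xᵀ·X = I, for any n > (σ₁ − σ_m)/m where σ₁, σ_m are the largest and smallest eigenvalues of Q. -/
/-!
A Householder reflection inside the zero eigenspace of `Q` turns `U` into an orthonormal
eigenbasis `V` of `Q` whose column `i₀` is `1 / √m`. In the coordinates `Y = Vᵀ X` the constraint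
`Xᵀ 1 = 0` says that row `i₀` of `Y` vanishes, and `Q + n 1 1ᵀ` becomes diagonal, with the
eigenvalue `σ i₀ = 0` replaced by `n m`, which exceeds every `σ j`.

For a diagonal matrix `D` and `λ` antitone and nonnegative, Abel summation reduces
`tr(Yᵀ D Y Λ)` to the partial sums `∑_{k ≤ r} ∑_i D_i Y_ik²`. Each of them weights `D` by weights
in `[0, 1]` with total `r + 1`, so it is at least the sum of the `r + 1` smallest admissible
entries of `D`. Hence both problems have the minimum `∑_k λ_k σ_{π k}`, where `π` lists the `d`
smallest eigenvalues other than `σ i₀`, and the corresponding columns of `V` attain it.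
-/

open Matrix Finset

theorem Finset.sum_le_sum_mul_of_sum_eq_card {ι : Type*} [Fintype ι] (D q : ι → ℝ) (S : Finset ι)
    (t : ℝ) (hq0 : ∀ i, 0 ≤ q i) (hq1 : ∀ i, q i ≤ 1) (hS : ∀ i ∈ S, D i ≤ t)
    (hSc : ∀ i ∉ S, q i = 0 ∨ t ≤ D i) (hq : ∑ i, q i = #S) :
    ∑ i ∈ S, D i ≤ ∑ i, D i * q i := by
  classical
  have key (i : ι) : t * (q i - if i ∈ S then 1 else 0) ≤ D i * q i - if i ∈ S then D i else 0 := by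
    by_cases hi : i ∈ S
    · simp only [hi, if_true]
      nlinarith [hS i hi, hq1 i]
    · simp only [hi, if_false, sub_zero]
      rcases hSc i hi with h | h
      · simp [h]
      · nlinarith [hq0 i]
  have := Finset.sum_le_sum fun i (_ : i ∈ univ) => key i
  simp_all [← Finset.mul_sum, Finset.sum_sub_distrib, Finset.sum_ite_mem]

theorem Fin.sum_mul_le_sum_mul_of_sum_Iic_le {d : ℕ} {f x y : Fin d → ℝ} (hf : Antitone f)
    (hf0 : ∀ k, 0 ≤ f k) (hxy : ∀ r, ∑ k ∈ Iic r, y k ≤ ∑ k ∈ Iic r, x k) :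
    ∑ k, f k * y k ≤ ∑ k, f k * x k := by
  induction d with
  | zero => simp
  | succ d ih =>
    have split (z : Fin (d + 1) → ℝ) : ∑ k, f k * z k =
        ∑ k : Fin d, (f k.castSucc - f (last d)) * z k.castSucc + f (last d) * ∑ k, z k := by
      simp only [Fin.sum_univ_castSucc, sub_mul, Finset.sum_sub_distrib, mul_add, ← Finset.mul_sum]
      ring
    rw [split x, split y]
    gcongr ?_ + ?_
    · refine ih (fun k l hkl => sub_le_sub_right (hf (Fin.castSucc_le_castSucc_iff.2 hkl)) _)
        (fun k => sub_nonneg.2 (hf (Fin.le_last _))) (fun r => ?_)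
      simpa only [Fin.sum_Iic_castSucc] using hxy r.castSucc
    · exact mul_le_mul_of_nonneg_left (by simpa [← Fin.top_eq_last] using hxy ⊤) (hf0 _)

section

variable {m d : ℕ}

theorem Matrix.sum_sq_apply_col_eq_one {Y : Matrix (Fin m) (Fin d) ℝ} (hY : Yᵀ * Y = 1)
    (k : Fin d) : ∑ i, Y i k ^ 2 = 1 := by
  simpa [mul_apply, sq] using congrFun (congrFun hY k) k

theorem Matrix.sum_sq_apply_row_le_one {Y : Matrix (Fin m) (Fin d) ℝ} (hY : Yᵀ * Y = 1)
    (i : Fin m) : ∑ k, Y i k ^ 2 ≤ 1 := by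
  set P := Y * Yᵀ
  have hPP : P * P = P := by
    rw [Matrix.mul_assoc, ← Matrix.mul_assoc Yᵀ, hY, Matrix.one_mul]
  have hdiag : P i i = ∑ k, Y i k ^ 2 := by simp [P, mul_apply, sq]
  have hsq : P i i = ∑ j, P i j ^ 2 := by
    conv_lhs => rw [← hPP]
    simp [mul_apply, P, sq, mul_comm]
  have : P i i ^ 2 ≤ ∑ j, P i j ^ 2 :=
    Finset.single_le_sum (f := fun j => P i j ^ 2) (fun j _ => sq_nonneg _) (mem_univ i)
  nlinarith

theorem Matrix.trace_transpose_mul_diagonal_mul_mul_diagonal (D : Fin m → ℝ) (lam : Fin d → ℝ)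
    (Y : Matrix (Fin m) (Fin d) ℝ) :
    (Yᵀ * diagonal D * Y * diagonal lam).trace = ∑ k, lam k * ∑ i, D i * Y i k ^ 2 := by
  have entry (k : Fin d) : (Yᵀ * diagonal D * Y) k k = ∑ i, D i * Y i k ^ 2 := by
    simp only [mul_apply (M := Yᵀ * diagonal D), mul_diagonal, transpose_apply]
    exact Finset.sum_congr rfl fun i _ => by ring
  simp only [trace, diag_apply, mul_diagonal, entry, mul_comm]

theorem Matrix.sum_mul_comp_le_trace_of_orthonormal (D : Fin m → ℝ) {lam : Fin d → ℝ}
    (hlam : Antitone lam) (hlam0 : ∀ k, 0 ≤ lam k) {π : Fin d → Fin m}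
    (hπ : Function.Injective π) (hDπ : Monotone (D ∘ π)) {Y : Matrix (Fin m) (Fin d) ℝ}
    (hY : Yᵀ * Y = 1)
    (hlow : ∀ r j, j ∉ (Iic r).image π → (∀ k, Y j k = 0) ∨ D (π r) ≤ D j) :
    ∑ k, lam k * D (π k) ≤ (Yᵀ * diagonal D * Y * diagonal lam).trace := by
  rw [trace_transpose_mul_diagonal_mul_mul_diagonal]
  refine Fin.sum_mul_le_sum_mul_of_sum_Iic_le hlam hlam0 fun r => ?_
  set q : Fin m → ℝ := fun i => ∑ k ∈ Iic r, Y i k ^ 2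
  have hq1 (i : Fin m) : q i ≤ 1 :=
    (Finset.sum_le_sum_of_subset_of_nonneg (subset_univ _) fun _ _ _ => sq_nonneg _).trans
      (sum_sq_apply_row_le_one hY i)
  have hq : ∑ i, q i = #((Iic r).image π) := by
    rw [card_image_of_injective _ hπ, Finset.sum_comm]
    simp [sum_sq_apply_col_eq_one hY]
  have hS (i) (hi : i ∈ (Iic r).image π) : D i ≤ D (π r) := by
    obtain ⟨k, hk, rfl⟩ := mem_image.1 hi
    exact hDπ (mem_Iic.1 hk)
  have hSc (i) (hi : i ∉ (Iic r).image π) : q i = 0 ∨ D (π r) ≤ D i :=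
    (hlow r i hi).imp_left fun h => by simp [q, h]
  calc ∑ k ∈ Iic r, D (π k) = ∑ i ∈ (Iic r).image π, D i := (sum_image hπ.injOn).symm
    _ ≤ ∑ i, D i * q i := Finset.sum_le_sum_mul_of_sum_eq_card D q _ _
          (fun i => sum_nonneg fun _ _ => sq_nonneg _) hq1 hS hSc hq
    _ = ∑ k ∈ Iic r, ∑ i, D i * Y i k ^ 2 := by
          simp only [q, Finset.mul_sum]; exact Finset.sum_comm

theorem Matrix.transpose_submatrix_one_mul_mul_submatrix_one (M : Matrix (Fin m) (Fin m) ℝ)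
    (π : Fin d → Fin m) :
    ((1 : Matrix (Fin m) (Fin m) ℝ).submatrix id π)ᵀ * M *
      (1 : Matrix (Fin m) (Fin m) ℝ).submatrix id π = M.submatrix π π := by
  ext k l
  simp [mul_apply, one_apply]

theorem Matrix.transpose_mulVec_eq_of_transpose_mulVec_eq_single {V : Matrix (Fin m) (Fin m) ℝ}
    (hV : V * Vᵀ = 1) {w : Fin m → ℝ} {i₀ : Fin m} {s : ℝ} (hw : Vᵀ *ᵥ w = Pi.single i₀ s)
    (X : Matrix (Fin m) (Fin d) ℝ) : Xᵀ *ᵥ w = fun k => (Vᵀ * X) i₀ k * s := by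
  rw [← one_mulVec w, ← hV, ← mulVec_mulVec, hw, mulVec_mulVec, ← transpose_transpose V,
    ← transpose_mul, transpose_transpose, mulVec_single]
  rfl

variable {V : Matrix (Fin m) (Fin m) ℝ} {lam : Fin d → ℝ} {π : Fin d → Fin m}

theorem Matrix.sum_mul_comp_le_trace_conj_of_orthonormal (hV : Vᵀ * V = 1) (D : Fin m → ℝ)
    (hlam : Antitone lam) (hlam0 : ∀ k, 0 ≤ lam k) (hπ : Function.Injective π)
    (hDπ : Monotone (D ∘ π)) {X : Matrix (Fin m) (Fin d) ℝ} (hX : Xᵀ * X = 1)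
    (hlow : ∀ r j, j ∉ (Iic r).image π → (∀ k, (Vᵀ * X) j k = 0) ∨ D (π r) ≤ D j) :
    ∑ k, lam k * D (π k) ≤ (Xᵀ * (V * diagonal D * Vᵀ) * X * diagonal lam).trace := by
  have hY : (Vᵀ * X)ᵀ * (Vᵀ * X) = 1 := by
    rw [transpose_mul, transpose_transpose, Matrix.mul_assoc, ← Matrix.mul_assoc V,
      mul_eq_one_comm.1 hV, Matrix.one_mul, hX]
  convert sum_mul_comp_le_trace_of_orthonormal D hlam hlam0 hπ hDπ hY hlow using 3
  simp only [transpose_mul, transpose_transpose, Matrix.mul_assoc]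

theorem Matrix.exists_trace_conj_diagonal_eq (hV : Vᵀ * V = 1) (D : Fin m → ℝ)
    (hπ : Function.Injective π) :
    ∃ X : Matrix (Fin m) (Fin d) ℝ, Xᵀ * X = 1 ∧
      Vᵀ * X = (1 : Matrix (Fin m) (Fin m) ℝ).submatrix id π ∧
      (Xᵀ * (V * diagonal D * Vᵀ) * X * diagonal lam).trace = ∑ k, lam k * D (π k) := by
  have hconj (M : Matrix (Fin m) (Fin m) ℝ) :
      (V * (1 : Matrix (Fin m) (Fin m) ℝ).submatrix id π)ᵀ * M *
        (V * (1 : Matrix (Fin m) (Fin m) ℝ).submatrix id π) = (Vᵀ * M * V).submatrix π π := by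
    rw [← transpose_submatrix_one_mul_mul_submatrix_one]
    simp only [transpose_mul, Matrix.mul_assoc]
  refine ⟨V * (1 : Matrix (Fin m) (Fin m) ℝ).submatrix id π, ?_, ?_, ?_⟩
  · simpa [hV, submatrix_one _ hπ] using hconj 1
  · rw [← Matrix.mul_assoc, hV, Matrix.one_mul]
  · have : Vᵀ * (V * diagonal D * Vᵀ) * V = diagonal D := by
      simp only [← Matrix.mul_assoc, hV, Matrix.one_mul]
      rw [Matrix.mul_assoc, hV, Matrix.mul_one]
    rw [hconj, this, submatrix_diagonal _ _ hπ, diagonal_mul_diagonal, trace_diagonal]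
    simp [mul_comm]

theorem Matrix.isLeast_trace_conj_diagonal (hV : Vᵀ * V = 1) (D : Fin m → ℝ)
    (hlam : Antitone lam) (hlam0 : ∀ k, 0 ≤ lam k) (hπ : Function.Injective π)
    (hDπ : Monotone (D ∘ π)) (hD : ∀ r j, j ∉ (Iic r).image π → D (π r) ≤ D j) :
    IsLeast {v | ∃ X : Matrix (Fin m) (Fin d) ℝ, Xᵀ * X = 1 ∧
      v = (Xᵀ * (V * diagonal D * Vᵀ) * X * diagonal lam).trace} (∑ k, lam k * D (π k)) := by
  obtain ⟨X, hX, -, hXv⟩ := exists_trace_conj_diagonal_eq (lam := lam) hV D hπ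
  refine ⟨⟨X, hX, hXv.symm⟩, ?_⟩
  rintro _ ⟨X, hX, rfl⟩
  exact sum_mul_comp_le_trace_conj_of_orthonormal hV D hlam hlam0 hπ hDπ hX
    fun r j hj => .inr (hD r j hj)

theorem Matrix.isLeast_trace_conj_diagonal_of_transpose_mulVec_eq_zero (hV : Vᵀ * V = 1)
    {w : Fin m → ℝ} {i₀ : Fin m} {s : ℝ} (hw : Vᵀ *ᵥ w = Pi.single i₀ s) (hs : s ≠ 0)
    (D : Fin m → ℝ) (hlam : Antitone lam) (hlam0 : ∀ k, 0 ≤ lam k) (hπ : Function.Injective π)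
    (hπi₀ : ∀ k, π k ≠ i₀) (hDπ : Monotone (D ∘ π))
    (hD : ∀ r j, j ∉ (Iic r).image π → j ≠ i₀ → D (π r) ≤ D j) :
    IsLeast {v | ∃ X : Matrix (Fin m) (Fin d) ℝ, Xᵀ * X = 1 ∧ Xᵀ *ᵥ w = 0 ∧
      v = (Xᵀ * (V * diagonal D * Vᵀ) * X * diagonal lam).trace} (∑ k, lam k * D (π k)) := by
  have hXw := transpose_mulVec_eq_of_transpose_mulVec_eq_single (d := d) (mul_eq_one_comm.1 hV) hw
  obtain ⟨X, hX, hVX, hXv⟩ := exists_trace_conj_diagonal_eq (lam := lam) hV D hπ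
  refine ⟨⟨X, hX, ?_, hXv.symm⟩, ?_⟩
  · rw [hXw, hVX]
    funext k
    simp [(hπi₀ k).symm]
  rintro _ ⟨X, hX, hX0, rfl⟩
  refine sum_mul_comp_le_trace_conj_of_orthonormal hV D hlam hlam0 hπ hDπ hX fun r j hj => ?_
  by_cases hj₀ : j = i₀
  · subst hj₀
    rw [hXw] at hX0
    exact .inl fun k => (mul_eq_zero.1 (congrFun hX0 k)).resolve_right hs
  · exact .inr (hD r j hj hj₀)

end

theorem Matrix.exists_orthogonal_conj_diagonal_mulVec_eq {ι : Type*} [Fintype ι] [DecidableEq ι]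
    (σ a b : ι → ℝ) (hab : a ⬝ᵥ a = b ⬝ᵥ b) (ha : ∀ i, σ i * a i = 0)
    (hb : ∀ i, σ i * b i = 0) :
    ∃ H : Matrix ι ι ℝ, Hᵀ * H = 1 ∧ Hᵀ * diagonal σ * H = diagonal σ ∧ H *ᵥ a = b := by
  by_cases hab' : a = b
  · exact ⟨1, by simp, by simp, by simp [hab']⟩
  set u := a - b
  have hu : u ⬝ᵥ u ≠ 0 := fun h => hab' (sub_eq_zero.1 (dotProduct_self_eq_zero.1 h))
  have hσu (i : ι) : σ i * u i = 0 := by simp [u, mul_sub, ha, hb]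
  have hua : 2 * (u ⬝ᵥ a) = u ⬝ᵥ u := by
    simp only [u, sub_dotProduct, dotProduct_sub, dotProduct_comm b a, hab]; ring
  -- the Householder reflection exchanging `a` and `b`
  set H : Matrix ι ι ℝ := 1 - (2 / (u ⬝ᵥ u)) • vecMulVec u u
  have hHT : Hᵀ = H := by simp [H, transpose_vecMulVec]
  have hHH : H * H = 1 := by
    have huu : vecMulVec u u * vecMulVec u u = (u ⬝ᵥ u) • vecMulVec u u := by
      rw [vecMulVec_mul_vecMulVec, vecMulVec_smul]
    have hc : 2 / (u ⬝ᵥ u) * (2 / (u ⬝ᵥ u)) * (u ⬝ᵥ u) = 2 / (u ⬝ᵥ u) + 2 / (u ⬝ᵥ u) := by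
      field_simp; ring
    simp only [H, sub_mul, mul_sub, Matrix.one_mul, Matrix.mul_one, smul_mul_smul_comm, huu,
      smul_smul, hc, add_smul]
    abel
  have hσH : diagonal σ * H = diagonal σ := by
    have : diagonal σ *ᵥ u = 0 := funext fun i => by simp [mulVec_diagonal, hσu]
    simp [H, mul_sub, mul_vecMulVec, this]
  have hHσ : H * diagonal σ = diagonal σ := by
    have : u ᵥ* diagonal σ = 0 := funext fun i => by simp [vecMul_diagonal, mul_comm, hσu]
    simp [H, sub_mul, vecMulVec_mul, this]
  refine ⟨H, by rw [hHT, hHH], by rw [hHT, hHσ, hσH], ?_⟩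
  rw [sub_mulVec, one_mulVec, smul_mulVec, vecMulVec_mulVec]
  have h1 : 2 / (u ⬝ᵥ u) * (u ⬝ᵥ a) = 1 := by rw [div_mul_eq_mul_div, hua, div_self hu]
  rw [op_smul_eq_smul, smul_smul, h1, one_smul, sub_sub_cancel]

theorem Matrix.exists_orthogonal_eigenbasis_transpose_mulVec_eq_single {m : ℕ}
    {Q U : Matrix (Fin m) (Fin m) ℝ} {σ w : Fin m → ℝ} (hU : Uᵀ * U = 1)
    (hQ : Q = U * diagonal σ * Uᵀ) (hQw : Q *ᵥ w = 0) (hw : w ≠ 0) :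
    ∃ (V : Matrix (Fin m) (Fin m) ℝ) (i₀ : Fin m), Vᵀ * V = 1 ∧ Q = V * diagonal σ * Vᵀ ∧
      σ i₀ = 0 ∧ Vᵀ *ᵥ w = Pi.single i₀ √(w ⬝ᵥ w) := by
  have hUU : U * Uᵀ = 1 := mul_eq_one_comm.1 hU
  set c := Uᵀ *ᵥ w
  have hσc (i : Fin m) : σ i * c i = 0 := by
    have : diagonal σ *ᵥ c = Uᵀ *ᵥ (Q *ᵥ w) := by
      rw [hQ, mulVec_mulVec, mulVec_mulVec, ← Matrix.mul_assoc, ← Matrix.mul_assoc, hU,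
        Matrix.one_mul]
    simpa [hQw, mulVec_diagonal] using congrFun this i
  have hcc : c ⬝ᵥ c = w ⬝ᵥ w := by
    rw [dotProduct_mulVec, vecMul_transpose, mulVec_mulVec, hUU, one_mulVec]
  obtain ⟨i₀, hi₀⟩ : ∃ i, c i ≠ 0 := by
    by_contra! h
    refine hw (dotProduct_self_eq_zero.1 ?_)
    rw [← hcc, show c = 0 from funext h, dotProduct_zero]
  have hσi₀ : σ i₀ = 0 := (mul_eq_zero.1 (hσc i₀)).resolve_right hi₀
  have hnorm : c ⬝ᵥ c = Pi.single i₀ √(w ⬝ᵥ w) ⬝ᵥ Pi.single i₀ √(w ⬝ᵥ w) := by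
    simpa [hcc] using (Real.mul_self_sqrt (dotProduct_self_star_nonneg w)).symm
  obtain ⟨H, hH, hHσ, hHc⟩ := exists_orthogonal_conj_diagonal_mulVec_eq σ c _ hnorm hσc
    fun i => by by_cases h : i = i₀ <;> simp [h, hσi₀]
  refine ⟨U * Hᵀ, i₀, ?_, ?_, hσi₀, ?_⟩
  · rw [transpose_mul, transpose_transpose, Matrix.mul_assoc, ← Matrix.mul_assoc Uᵀ, hU,
      Matrix.one_mul, mul_eq_one_comm.1 hH]
  · rw [hQ]
    nth_rewrite 1 [← hHσ]
    simp only [transpose_mul, transpose_transpose, Matrix.mul_assoc]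
  · rw [transpose_mul, transpose_transpose, ← mulVec_mulVec, hHc]

theorem Matrix.conj_diagonal_add_smul_vecMulVec {m : ℕ} {V : Matrix (Fin m) (Fin m) ℝ}
    (hV : Vᵀ * V = 1) (σ w : Fin m → ℝ) {i₀ : Fin m} {s : ℝ} (hw : Vᵀ *ᵥ w = Pi.single i₀ s)
    (n : ℝ) :
    V * diagonal σ * Vᵀ + n • vecMulVec w w = V * diagonal (σ + Pi.single i₀ (n * s ^ 2)) * Vᵀ := by
  have hsingle : vecMulVec (Pi.single i₀ s) (Pi.single i₀ s) = diagonal (Pi.single i₀ (s ^ 2)) := by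
    ext i j
    simp only [vecMulVec_apply, diagonal_apply, Pi.single_apply]
    split_ifs <;> simp_all [sq]
  have hconj : vecMulVec w w = V * diagonal (Pi.single i₀ (s ^ 2)) * Vᵀ := by
    rw [← hsingle, mul_vecMulVec, vecMulVec_mul, vecMul_transpose, ← hw, mulVec_mulVec,
      mul_eq_one_comm.1 hV, one_mulVec]
  have hdiag : diagonal (σ + Pi.single i₀ (n * s ^ 2)) =
      diagonal σ + n • diagonal (Pi.single i₀ (s ^ 2)) := by
    rw [← diagonal_smul, diagonal_add, ← Pi.single_smul', smul_eq_mul]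
    rfl
  rw [hconj, hdiag, Matrix.mul_add, Matrix.add_mul, Matrix.mul_smul, Matrix.smul_mul]

section

theorem Fin.exists_strictAnti_enum_largest_ne {m d : ℕ} (hd : d < m) (i₀ : Fin m) :
    ∃ π : Fin d → Fin m, StrictAnti π ∧ (∀ k, π k ≠ i₀) ∧
      ∀ r j, j ≠ i₀ → j ∉ (Iic r).image π → j < π r := by
  obtain ⟨m, rfl⟩ := Nat.exists_eq_add_one_of_ne_zero (by omega : m ≠ 0)
  have hπ : StrictAnti fun k : Fin d => i₀.succAbove (castLE (by omega) k).rev :=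
    (strictMono_succAbove i₀).comp_strictAnti (rev_strictAnti.comp_strictMono (strictMono_castLE _))
  refine ⟨_, hπ, fun k => succAbove_ne _ _, fun r j hj hjr => ?_⟩
  obtain ⟨t, rfl⟩ := exists_succAbove_eq hj
  by_contra! hle
  have ht : t.rev ≤ castLE _ r := rev_le_iff.1 (succAbove_le_succAbove_iff.1 hle)
  refine hjr (mem_image.2 ⟨⟨t.rev, by have := r.2; simp only [le_def, val_castLE] at ht; omega⟩,
    mem_Iic.2 (by simpa [le_def] using ht), ?_⟩)
  exact congrArg _ (rev_rev t)

/-- Constrained Brockett minimization: for `Q` symmetric with `Q·1 = 0` and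
`n > (σ₁ − σ_m)/m`, the minimum of `tr(XᵀQXΛ)` subject to `XᵀX = I` and
`Xᵀ1 = 0` equals the minimum of `tr(Xᵀ(Q + n·1·1ᵀ)XΛ)` subject only to
`XᵀX = I`. -/
theorem stmt13 (m d : ℕ) (hd : d < m) (Q U : Matrix (Fin m) (Fin m) ℝ)
    (hQ1 : Q *ᵥ (fun _ => (1 : ℝ)) = 0)
    (σ : Fin m → ℝ) (hσ : Antitone σ) (hU : Uᵀ * U = 1)
    (hQ : Q = U * Matrix.diagonal σ * Uᵀ)
    (lam : Fin d → ℝ) (hlam : Antitone lam) (hlam0 : ∀ k, 0 ≤ lam k)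
    (n : ℝ)
    (hn : (σ (⟨0, by omega⟩ : Fin m) - σ (⟨m - 1, by omega⟩ : Fin m)) / m < n) :
    sInf {v : ℝ | ∃ X : Matrix (Fin m) (Fin d) ℝ, Xᵀ * X = 1 ∧
        Xᵀ *ᵥ (fun _ => (1 : ℝ)) = 0 ∧
        v = (Xᵀ * Q * X * Matrix.diagonal lam).trace}
      = sInf {v : ℝ | ∃ X : Matrix (Fin m) (Fin d) ℝ, Xᵀ * X = 1 ∧
          v = (Xᵀ * (Q + n • Matrix.vecMulVec (fun _ => (1 : ℝ)) (fun _ => (1 : ℝ)))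
              * X * Matrix.diagonal lam).trace} := by
  have hm : 0 < m := by omega
  have hone : (fun _ : Fin m => (1 : ℝ)) ⬝ᵥ (fun _ => 1) = m := by simp [dotProduct]
  obtain ⟨V, i₀, hV, hQV, hσi₀, hV1⟩ := exists_orthogonal_eigenbasis_transpose_mulVec_eq_single
    hU hQ hQ1 (Function.ne_iff.2 ⟨⟨0, hm⟩, one_ne_zero⟩)
  rw [hone] at hV1
  obtain ⟨π, hπ, hπi₀, hπlarge⟩ := Fin.exists_strictAnti_enum_largest_ne hd i₀
  have hσπ : Monotone (σ ∘ π) := hσ.comp hπ.antitone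
  have hσ_lt (j : Fin m) : σ j < n * m := by
    have hfirst : σ j ≤ σ ⟨0, hm⟩ := hσ (Fin.le_def.2 (Nat.zero_le _))
    have hlast : σ ⟨m - 1, by omega⟩ ≤ σ i₀ := hσ (Fin.le_def.2 (Nat.le_sub_one_of_lt i₀.2))
    linarith [(div_lt_iff₀ (by positivity : (0 : ℝ) < m)).1 hn]
  -- the eigenvalues of `Q + n 1 1ᵀ` in the basis `V`
  set D := σ + Pi.single i₀ (n * m)
  have hDπ (k : Fin d) : D (π k) = σ (π k) := by simp [D, hπi₀ k]
  have hshift : Q + n • vecMulVec (fun _ => (1 : ℝ)) (fun _ => 1) = V * diagonal D * Vᵀ := by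
    rw [hQV, conj_diagonal_add_smul_vecMulVec hV σ _ hV1, Real.sq_sqrt m.cast_nonneg]
  have hD (r : Fin d) (j : Fin m) (hj : j ∉ (Iic r).image π) : D (π r) ≤ D j := by
    by_cases hj₀ : j = i₀
    · simpa [hDπ, D, hj₀, hσi₀] using (hσ_lt (π r)).le
    · simpa [hDπ, D, hj₀] using hσ (hπlarge r j hj₀ hj).le
  have hDπ_mono : Monotone (D ∘ π) := by simpa [Function.comp_def, hDπ] using hσπ
  rw [hshift, hQV, (isLeast_trace_conj_diagonal_of_transpose_mulVec_eq_zero hV hV1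
    (by positivity) σ hlam hlam0 hπ.injective hπi₀ hσπ
    fun r j hj hj₀ => hσ (hπlarge r j hj₀ hj).le).csInf_eq,
    (isLeast_trace_conj_diagonal hV D hlam hlam0 hπ.injective hDπ_mono hD).csInf_eq]
  simp only [hDπ]
end
end
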